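/- Let Z be a real skew-symmetric n×n matrix such that I − ZᵀZ is positive definite. Then det(Z + √(I − ZᵀZ)) = 1. -/

import Mathlib

open Matrix

open scoped ComplexOrder in
/-- The positive semidefinite square root of a positive semidefinite matrix, as defined in
Mathlib (December 2024) under this name; since removed from Mathlib. -/
noncomputable def Matrix.PosSemidef.sqrt {n 𝕜 : Type*} [Fintype n] [RCLike 𝕜] [DecidableEq n]
    {A : Matrix n n 𝕜} (hA : A.PosSemidef) : Matrix n n 𝕜 :=
  hA.1.eigenvectorUnitary.1 * diagonal ((↑) ∘ (√·) ∘ hA.1.eigenvalues) *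
    (star hA.1.eigenvectorUnitary : Matrix n n 𝕜)

/-!
Since `Z` commutes with `1 - Zᵀ Z = 1 + Z²`, it commutes with its square root `S`, so
`(Z + S)ᵀ (Z + S) = S² - Z² = 1` and `det (Z + S) = ±1`. The sign is `+`: `S` is positive
definite and `Z` skew, so `xᵀ (S + t Z) x = xᵀ S x > 0` for `x ≠ 0`; hence `det (S + t Z)` never
vanishes and stays positive from `t = 0` to `t = 1`.
-/

open scoped MatrixOrder

namespace Matrix

variable {ι : Type*} [Fintype ι]

lemma dotProduct_mulVec_self_eq_zero_of_transpose_eq_neg {Z : Matrix ι ι ℝ} (hZ : Zᵀ = -Z)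
    (x : ι → ℝ) : x ⬝ᵥ (Z *ᵥ x) = 0 := by
  have h : x ⬝ᵥ (Zᵀ *ᵥ x) = x ⬝ᵥ (Z *ᵥ x) := by
    rw [mulVec_transpose, dotProduct_comm, dotProduct_mulVec]
  rw [hZ, neg_mulVec, dotProduct_neg] at h
  linarith

variable [DecidableEq ι]

lemma PosSemidef.sqrt_eq_cfcSqrt {A : Matrix ι ι ℝ} (hA : A.PosSemidef) :
    hA.sqrt = CFC.sqrt A := by
  rw [CFC.sqrt_eq_cfc, cfc_nnreal_eq_real _ A, hA.1.cfc_eq]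
  simp only [PosSemidef.sqrt, IsHermitian.cfc, Unitary.conjStarAlgAut_apply]
  congr 3
  funext i
  simp [Real.coe_toNNReal', max_eq_left (hA.eigenvalues_nonneg i)]

lemma PosSemidef.sqrt_mul_self {A : Matrix ι ι ℝ} (hA : A.PosSemidef) :
    hA.sqrt * hA.sqrt = A := by
  rw [hA.sqrt_eq_cfcSqrt]
  exact CFC.sqrt_mul_sqrt_self A hA.nonneg

lemma PosSemidef.commute_sqrt {A B : Matrix ι ι ℝ} (hA : A.PosSemidef) (h : Commute A B) :
    Commute hA.sqrt B := by
  rw [hA.sqrt_eq_cfcSqrt, CFC.sqrt_eq_cfc]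
  exact h.cfc_nnreal _

lemma PosDef.posDef_sqrt {A : Matrix ι ι ℝ} (hA : A.PosDef) : hA.posSemidef.sqrt.PosDef := by
  rw [hA.posSemidef.sqrt_eq_cfcSqrt, ← isStrictlyPositive_iff_posDef]
  exact IsStrictlyPositive.sqrt A hA.isStrictlyPositive

lemma PosDef.det_add_ne_zero_of_transpose_eq_neg {S Z : Matrix ι ι ℝ} (hS : S.PosDef)
    (hZ : Zᵀ = -Z) : (S + Z).det ≠ 0 := by
  intro h
  obtain ⟨x, hx, hSZx⟩ := exists_mulVec_eq_zero_iff.mpr h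
  have hpos := hS.dotProduct_mulVec_pos hx
  have hzero : x ⬝ᵥ ((S + Z) *ᵥ x) = 0 := by rw [hSZx, dotProduct_zero]
  rw [add_mulVec, dotProduct_add, dotProduct_mulVec_self_eq_zero_of_transpose_eq_neg hZ,
    add_zero] at hzero
  simp [hzero] at hpos

lemma PosDef.det_add_pos_of_transpose_eq_neg {S Z : Matrix ι ι ℝ} (hS : S.PosDef)
    (hZ : Zᵀ = -Z) : 0 < (S + Z).det := by
  set f : ℝ → ℝ := fun t ↦ (S + t • Z).det
  have hf : Continuous f := by fun_prop
  have hf_ne (t : ℝ) : f t ≠ 0 :=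
    hS.det_add_ne_zero_of_transpose_eq_neg (by rw [transpose_smul, hZ, smul_neg])
  have hf0 : 0 < f 0 := by simpa [f] using hS.det_pos
  by_contra! hf1
  obtain ⟨t, -, ht⟩ := intermediate_value_Icc' zero_le_one hf.continuousOn
    ⟨by simpa [f] using hf1, hf0.le⟩
  exact hf_ne t ht

lemma det_eq_one_of_transpose_mul_self_eq_one {M : Matrix ι ι ℝ} (hM : Mᵀ * M = 1)
    (hpos : 0 < M.det) : M.det = 1 := by
  have h : M.det ^ 2 = 1 := by
    rw [sq]
    nth_rw 1 [← det_transpose]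
    rw [← det_mul, hM, det_one]
  exact (pow_eq_one_iff_of_nonneg hpos.le two_ne_zero).mp h

lemma transpose_add_mul_self_eq_one {R : Type*} [CommRing R] {S Z : Matrix ι ι R}
    (hS : Sᵀ = S) (hZ : Zᵀ = -Z) (hSZ : Commute S Z) (hSS : S * S = 1 + Z * Z) :
    (Z + S)ᵀ * (Z + S) = 1 := by
  calc (Z + S)ᵀ * (Z + S) = S * S - Z * Z + (S * Z - Z * S) := by
        rw [transpose_add, hS, hZ]; noncomm_ring
    _ = 1 := by rw [hSS, hSZ.eq]; abel

end Matrix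

/-- Let `Z` be a real skew-symmetric `n × n` matrix such that
`I - Zᵀ Z` is positive definite.  Then `det (Z + √(I - Zᵀ Z)) = 1`, where the square
root is the unique positive (semi)definite square root. -/
theorem stmt2 {n : ℕ} (Z : Matrix (Fin n) (Fin n) ℝ)
    (hZ : Zᵀ = -Z) (hpd : (1 - Zᵀ * Z).PosDef) :
    (Z + hpd.posSemidef.sqrt).det = 1 := by
  have hA : 1 - Zᵀ * Z = 1 + Z * Z := by rw [hZ, neg_mul, sub_neg_eq_add]
  have hAZ : Commute (1 - Zᵀ * Z) Z := by
    rw [hA]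
    exact (Commute.one_left Z).add_left ((Commute.refl Z).mul_left (Commute.refl Z))
  have hS := hpd.posDef_sqrt
  refine det_eq_one_of_transpose_mul_self_eq_one ?_ ?_
  · refine transpose_add_mul_self_eq_one hS.isHermitian hZ (hpd.posSemidef.commute_sqrt hAZ) ?_
    rw [hpd.posSemidef.sqrt_mul_self, hA]
  · rw [add_comm]
    exact hS.det_add_pos_of_transpose_eq_neg hZ
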